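/- arXiv:1802.03873 — 5 statements merged into one kernel-verified Lean document; each statement's English description precedes it below -/
import Mathlib

section
/- (Order preservation for PRIL.) For every trial t ≥ 1 of the PRIL algorithm, the threshold vector θ^t produced by the algorithm satisfies θ_1^t ≤ θ_2^t ≤ … ≤ θ_{K−1}^t (moreover every θ_i^t is an integer). -/
open Finset

noncomputable def dotp {d : ℕ} (w x : Fin d → ℝ) : ℝ := ∑ i, w i * x i

noncomputable def zval (yl : ℕ) (i : ℕ) : ℝ := if i < yl then 1 else -1

def Ibar (K yl yr : ℕ) : Finset ℕ := Finset.Icc 1 (yl - 1) ∪ Finset.Icc yr (K - 1)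

noncomputable def tau {d : ℕ} (K yl yr : ℕ) (x w : Fin d → ℝ) (θ : ℕ → ℝ) (i : ℕ) : ℝ :=
  if i ∈ Ibar K yl yr ∧ zval yl i * (dotp w x - θ i) ≤ 0 then zval yl i else 0

noncomputable def LMAE (K : ℕ) (f : ℝ) (θ : ℕ → ℝ) (yl yr : ℕ) : ℝ :=
  (∑ i ∈ Finset.Icc 1 (yl - 1), if f < θ i then (1:ℝ) else 0) +
  (∑ i ∈ Finset.Icc yr (K - 1), if θ i ≤ f then (1:ℝ) else 0)

noncomputable def LIMC (K : ℕ) (f : ℝ) (yl yr : ℕ) (θ : ℕ → ℝ) : ℝ :=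
  (∑ i ∈ Finset.Icc 1 (yl - 1), max 0 (θ i - f)) +
  (∑ i ∈ Finset.Icc yr (K - 1), max 0 (f - θ i))

noncomputable def mcount {d : ℕ} (K yl yr : ℕ) (x w : Fin d → ℝ) (θ : ℕ → ℝ) : ℕ :=
  ((Ibar K yl yr).filter (fun i => zval yl i * (dotp w x - θ i) ≤ 0)).card


private lemma int_succ_le {a b : ℝ} (ha : ∃ m : ℤ, a = (m:ℝ)) (hb : ∃ n : ℤ, b = (n:ℝ))
    (h : a < b) : a + 1 ≤ b := by
  obtain ⟨m, rfl⟩ := ha; obtain ⟨n, rfl⟩ := hb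
  have : m < n := by exact_mod_cast h
  have : m + 1 ≤ n := this
  exact_mod_cast this

/-- Order preservation (and integrality) of the PRIL thresholds. -/
theorem pril_order_preservation
    {d K : ℕ} (hd : 1 ≤ d) (hK : 2 ≤ K)
    (x : ℕ → Fin d → ℝ) (yl yr : ℕ → ℕ)
    (hy : ∀ t, 1 ≤ t → 1 ≤ yl t ∧ yl t ≤ yr t ∧ yr t ≤ K)
    (w : ℕ → Fin d → ℝ) (θ : ℕ → ℕ → ℝ)
    (hw1 : w 1 = 0) (hθ1 : ∀ i, θ 1 i = 0)
    (hwrec : ∀ t, 1 ≤ t →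
      w (t+1) = w t + (∑ i ∈ Finset.Icc 1 (K-1),
        tau K (yl t) (yr t) (x t) (w t) (θ t) i) • x t)
    (hθrec : ∀ t, 1 ≤ t → ∀ i,
      θ (t+1) i = θ t i - tau K (yl t) (yr t) (x t) (w t) (θ t) i) :
    ∀ t, 1 ≤ t →
      (∀ i j, i ∈ Finset.Icc 1 (K-1) → j ∈ Finset.Icc 1 (K-1) → i ≤ j → θ t i ≤ θ t j) ∧
      (∀ i ∈ Finset.Icc 1 (K-1), ∃ n : ℤ, θ t i = (n : ℝ)) := by
  intro t ht
  induction t, ht using Nat.le_induction with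
  | base =>
    constructor
    · intro i j _ _ _; simp [hθ1]
    · intro i _; exact ⟨0, by simp [hθ1]⟩
  | succ t ht ih =>
    obtain ⟨hmono, hint⟩ := ih
    obtain ⟨hyl, hylr, hyrK⟩ := hy t ht
    set f := dotp (w t) (x t) with hf
    have htau : ∀ i, tau K (yl t) (yr t) (x t) (w t) (θ t) i =
        if i ∈ Ibar K (yl t) (yr t) ∧ zval (yl t) i * (f - θ t i) ≤ 0
        then zval (yl t) i else 0 := fun i => rfl
    have hzcases : ∀ i, zval (yl t) i = 1 ∨ zval (yl t) i = -1 := by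
      intro i; unfold zval; split <;> simp
    constructor
    · intro i j hi hj hij
      rw [hθrec t ht i, hθrec t ht j, htau i, htau j]
      rw [Finset.mem_Icc] at hi hj
      have hmij : θ t i ≤ θ t j := hmono i j (by simp [Finset.mem_Icc, hi]) (by simp [Finset.mem_Icc, hj]) hij
      have hIi : ∃ m : ℤ, θ t i = (m:ℝ) := hint i (by simp [Finset.mem_Icc, hi])
      have hIj : ∃ n : ℤ, θ t j = (n:ℝ) := hint j (by simp [Finset.mem_Icc, hj])
      by_cases hci : i ∈ Ibar K (yl t) (yr t) ∧ zval (yl t) i * (f - θ t i) ≤ 0 <;>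
        by_cases hcj : j ∈ Ibar K (yl t) (yr t) ∧ zval (yl t) j * (f - θ t j) ≤ 0
      · rw [if_pos hci, if_pos hcj]
        by_cases hjl : j < yl t
        · have hil : i < yl t := lt_of_le_of_lt hij hjl
          simp only [zval, if_pos hil, if_pos hjl]; linarith
        · by_cases hil : i < yl t
          · simp only [zval, if_pos hil, if_neg hjl]; linarith
          · simp only [zval, if_neg hil, if_neg hjl]; linarith
      · rw [if_pos hci, if_neg hcj]
        by_cases hil : i < yl t
        · have : zval (yl t) i = 1 := by simp [zval, hil]
          rw [this]; linarith
        · -- zval i = -1, so θ t i ≤ f; i ∈ Icc yr (K-1); j too; zval j = -1; ¬cj gives f < θ t j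
          have hzi : zval (yl t) i = -1 := by simp [zval, hil]
          have hfi : θ t i ≤ f := by
            have := hci.2; rw [hzi] at this; linarith
          have hiyr : yr t ≤ i := by
            have := hci.1
            simp only [Ibar, Finset.mem_union, Finset.mem_Icc] at this
            rcases this with ⟨_, h2⟩ | ⟨h1, _⟩
            · omega
            · exact h1
          have hjl : ¬ j < yl t := by omega
          have hzj : zval (yl t) j = -1 := by simp [zval, hjl]
          have hjI : j ∈ Ibar K (yl t) (yr t) := by
            simp only [Ibar, Finset.mem_union, Finset.mem_Icc]
            right; exact ⟨le_trans hiyr hij, hj.2⟩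
          have hfj : f < θ t j := by
            by_contra hcon
            exact hcj ⟨hjI, by rw [hzj]; push_neg at hcon; linarith⟩
          have := int_succ_le hIi hIj (lt_of_le_of_lt hfi hfj)
          rw [hzi]; linarith
      · rw [if_neg hci, if_pos hcj]
        by_cases hjl : j < yl t
        · have hzj : zval (yl t) j = 1 := by simp [zval, hjl]
          have hfj : f ≤ θ t j := by
            have := hcj.2; rw [hzj] at this; linarith
          have hil : i < yl t := lt_of_le_of_lt hij hjl
          have hiI : i ∈ Ibar K (yl t) (yr t) := by
            simp only [Ibar, Finset.mem_union, Finset.mem_Icc]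
            left; exact ⟨hi.1, by omega⟩
          have hzi : zval (yl t) i = 1 := by simp [zval, hil]
          have hfi : θ t i < f := by
            by_contra hcon
            exact hci ⟨hiI, by rw [hzi]; push_neg at hcon; linarith⟩
          have := int_succ_le hIi hIj (lt_of_lt_of_le hfi hfj)
          rw [hzj]; linarith
        · have hzj : zval (yl t) j = -1 := by simp [zval, hjl]
          rw [hzj]; linarith
      · rw [if_neg hci, if_neg hcj]; linarith
    · intro i hi
      obtain ⟨n, hn⟩ := hint i hi
      rw [hθrec t ht i, htau i, hn]
      rcases hzcases i with hz | hz <;> split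
      · exact ⟨n - 1, by rw [hz]; push_cast; ring⟩
      · exact ⟨n, by simp⟩
      · exact ⟨n + 1, by rw [hz]; push_cast; ring⟩
      · exact ⟨n, by simp⟩
end

section
/- (Mistake bound for PRIL, ideal case.) Let R² = max_{t∈[T]} ‖x^t‖² and c = min_{t∈[T]} (y_r^t − y_l^t). Suppose there exist γ > 0, w* ∈ ℝ^d and θ* ∈ ℝ^{K−1} with ‖w*‖² + Σ_{i=1}^{K−1}(θ_i*)² = 1 such that z_i^t(w*·x^t − θ_i*) ≥ γ for all i ∈ Ī^t and all t ∈ [T]. Then Σ_{t=1}^T L_I^{MAE}(w^t·x^t, θ^t, y_l^t, y_r^t) ≤ (R² + 1)(K − c − 1)/γ². -/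
open Finset

open scoped InnerProductSpace

/-! This is the perceptron argument. Regard `(w, θ)` as one vector `v ∈ ℝ^d × ℝ^{K-1}`; a PRIL
update adds `u = ((∑ τ_i) x, -τ)`, and `v* = (w*, θ*)` is a unit vector. By the margin, a trial
with `m` mistakes raises `⟪v, v*⟫` by at least `γ m`. Only violated thresholds move, so
`⟪v, u⟫ ≤ 0` and `‖v‖²` grows by at most `‖u‖² ≤ m² R² + m ≤ (R² + 1)(K - c - 1) m`, using
`m ≤ |Ī| ≤ K - c - 1` and `m ≤ m²` (`m` is a count). With `M = ∑ m`, Cauchy–Schwarz gives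
`γ² M² ≤ (R² + 1)(K - c - 1) M`, and the interval insensitive loss is at most `M`. -/

lemma eq_sum_Icc_of_succ_eq_add {M : Type*} [AddCommMonoid M] {v u : ℕ → M} {T : ℕ}
    (h1 : v 1 = 0) (hrec : ∀ t ∈ Icc 1 T, v (t + 1) = v t + u t) :
    v (T + 1) = ∑ t ∈ Icc 1 T, u t := by
  induction T with
  | zero => simpa using h1
  | succ n ih =>
    have hsub : Icc 1 n ⊆ Icc 1 (n + 1) := Icc_subset_Icc_right n.le_succ
    rw [sum_Icc_succ_top (by omega), hrec (n + 1) (by simp), ih fun t ht => hrec t (hsub ht)]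

section Perceptron

variable {V : Type*} [NormedAddCommGroup V] [InnerProductSpace ℝ V] {v u : ℕ → V} {T : ℕ}

lemma norm_sq_le_sum_of_inner_nonpos (h1 : v 1 = 0)
    (hrec : ∀ t ∈ Icc 1 T, v (t + 1) = v t + u t) (hnp : ∀ t ∈ Icc 1 T, ⟪v t, u t⟫_ℝ ≤ 0) :
    ‖v (T + 1)‖ ^ 2 ≤ ∑ t ∈ Icc 1 T, ‖u t‖ ^ 2 := by
  induction T with
  | zero => simp [h1]
  | succ n ih =>
    have hn : n + 1 ∈ Icc 1 (n + 1) := by simp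
    have hsub : Icc 1 n ⊆ Icc 1 (n + 1) := Icc_subset_Icc_right n.le_succ
    rw [sum_Icc_succ_top (by omega), hrec _ hn, norm_add_sq_real]
    linarith [ih (fun t ht => hrec t (hsub ht)) (fun t ht => hnp t (hsub ht)), hnp _ hn]

lemma le_div_sq_of_sq_mul_le {M B γ : ℝ} (hγ : 0 < γ) (hM : 0 ≤ M) (hB : 0 ≤ B)
    (h : (γ * M) ^ 2 ≤ B * M) : M ≤ B / γ ^ 2 := by
  rw [le_div_iff₀ (by positivity)]
  rcases hM.eq_or_lt with rfl | hM
  · simpa using hB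
  · nlinarith

theorem perceptron_sum_le_div_sq {vs : V} {m : ℕ → ℝ} {γ B : ℝ} (hγ : 0 < γ)
    (hvs : ‖vs‖ ≤ 1) (hB : 0 ≤ B) (h1 : v 1 = 0)
    (hrec : ∀ t ∈ Icc 1 T, v (t + 1) = v t + u t) (hnp : ∀ t ∈ Icc 1 T, ⟪v t, u t⟫_ℝ ≤ 0)
    (hm : ∀ t ∈ Icc 1 T, 0 ≤ m t) (hprog : ∀ t ∈ Icc 1 T, γ * m t ≤ ⟪u t, vs⟫_ℝ)
    (hnorm : ∀ t ∈ Icc 1 T, ‖u t‖ ^ 2 ≤ B * m t) :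
    ∑ t ∈ Icc 1 T, m t ≤ B / γ ^ 2 := by
  set M := ∑ t ∈ Icc 1 T, m t
  have hM : 0 ≤ M := sum_nonneg hm
  have hprogress : γ * M ≤ ‖v (T + 1)‖ := calc
    γ * M ≤ ∑ t ∈ Icc 1 T, ⟪u t, vs⟫_ℝ := by rw [mul_sum]; exact sum_le_sum hprog
    _ = ⟪v (T + 1), vs⟫_ℝ := by rw [eq_sum_Icc_of_succ_eq_add h1 hrec, sum_inner]
    _ ≤ ‖v (T + 1)‖ * ‖vs‖ := real_inner_le_norm _ _
    _ ≤ ‖v (T + 1)‖ := mul_le_of_le_one_right (norm_nonneg _) hvs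
  have hgrowth : ‖v (T + 1)‖ ^ 2 ≤ B * M := calc
    _ ≤ ∑ t ∈ Icc 1 T, ‖u t‖ ^ 2 := norm_sq_le_sum_of_inner_nonpos h1 hrec hnp
    _ ≤ B * M := by rw [mul_sum]; exact sum_le_sum hnorm
  exact le_div_sq_of_sq_mul_le hγ hM hB
    ((pow_le_pow_left₀ (by positivity) hprogress 2).trans hgrowth)

end Perceptron

section PairVector

variable {d : ℕ} (K : ℕ)

lemma dotp_smul_right (w x : Fin d → ℝ) (s : ℝ) : dotp w (s • x) = s * dotp w x := by
  simp only [dotp, mul_sum, Pi.smul_apply, smul_eq_mul, mul_left_comm]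

def pairVec (w : Fin d → ℝ) (θ : ℕ → ℝ) : EuclideanSpace ℝ (Fin d ⊕ Icc 1 (K - 1)) :=
  WithLp.toLp 2 (Sum.elim w fun i => θ i)

lemma inner_pairVec (w w' : Fin d → ℝ) (θ θ' : ℕ → ℝ) :
    ⟪pairVec K w θ, pairVec K w' θ'⟫_ℝ = dotp w w' + ∑ i ∈ Icc 1 (K - 1), θ i * θ' i := by
  simp [pairVec, PiLp.inner_apply, Fintype.sum_sum_type, dotp, mul_comm,
    sum_attach (Icc 1 (K - 1)) fun i => θ i * θ' i]

lemma pairVec_zero : pairVec K (0 : Fin d → ℝ) 0 = 0 := by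
  ext (j | i) <;> simp [pairVec]

lemma norm_pairVec_sq (w : Fin d → ℝ) (θ : ℕ → ℝ) :
    ‖pairVec K w θ‖ ^ 2 = ∑ j, w j ^ 2 + ∑ i ∈ Icc 1 (K - 1), θ i ^ 2 := by
  rw [← real_inner_self_eq_norm_sq, inner_pairVec]
  simp only [dotp, sq]

def updateVec (x : Fin d → ℝ) (τ : ℕ → ℝ) : EuclideanSpace ℝ (Fin d ⊕ Icc 1 (K - 1)) :=
  pairVec K ((∑ i ∈ Icc 1 (K - 1), τ i) • x) (-τ)

lemma pairVec_add_updateVec (w x : Fin d → ℝ) (θ τ : ℕ → ℝ) :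
    pairVec K w θ + updateVec K x τ = pairVec K (w + (∑ i ∈ Icc 1 (K - 1), τ i) • x) (θ - τ) := by
  ext (j | i) <;> simp [pairVec, updateVec, sub_eq_add_neg]

lemma inner_pairVec_updateVec (w x : Fin d → ℝ) (θ τ : ℕ → ℝ) :
    ⟪pairVec K w θ, updateVec K x τ⟫_ℝ = ∑ i ∈ Icc 1 (K - 1), τ i * (dotp w x - θ i) := by
  rw [updateVec, inner_pairVec, dotp_smul_right, sum_mul, ← sum_add_distrib]
  exact sum_congr rfl fun i _ => by simp only [Pi.neg_apply]; ring

lemma norm_updateVec_sq (x : Fin d → ℝ) (τ : ℕ → ℝ) :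
    ‖updateVec K x τ‖ ^ 2
      = (∑ i ∈ Icc 1 (K - 1), τ i) ^ 2 * ∑ j, x j ^ 2 + ∑ i ∈ Icc 1 (K - 1), τ i ^ 2 := by
  simp only [updateVec, norm_pairVec_sq, Pi.smul_apply, Pi.neg_apply, smul_eq_mul, mul_pow,
    neg_sq, mul_sum]

end PairVector

section Tau

variable {d : ℕ} {K yl yr : ℕ} {x w : Fin d → ℝ} {θ : ℕ → ℝ}

lemma Ibar_subset_Icc (hylK : yl ≤ K) (h1yr : 1 ≤ yr) : Ibar K yl yr ⊆ Icc 1 (K - 1) := by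
  intro i hi
  simp only [Ibar, mem_union, mem_Icc] at hi ⊢
  omega

lemma card_Ibar_add_le (h1yl : 1 ≤ yl) (hylyr : yl ≤ yr) (hyrK : yr ≤ K) :
    #(Ibar K yl yr) + (yr - yl) + 1 ≤ K := by
  have := card_union_le (Icc 1 (yl - 1)) (Icc yr (K - 1))
  simp only [Nat.card_Icc] at this
  rw [Ibar]
  omega

lemma mcount_add_le (h1yl : 1 ≤ yl) (hylyr : yl ≤ yr) (hyrK : yr ≤ K) :
    mcount K yl yr x w θ + (yr - yl) + 1 ≤ K :=
  le_trans (by gcongr; exact card_filter_le _ _) (card_Ibar_add_le h1yl hylyr hyrK)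

lemma mcount_le_sub {c : ℕ} (h1yl : 1 ≤ yl) (hylyr : yl ≤ yr) (hyrK : yr ≤ K)
    (hc : c ≤ yr - yl) : (mcount K yl yr x w θ : ℝ) ≤ K - c - 1 := by
  have := mcount_add_le (x := x) (w := w) (θ := θ) h1yl hylyr hyrK
  have : mcount K yl yr x w θ + c + 1 ≤ K := by omega
  have : (mcount K yl yr x w θ : ℝ) + c + 1 ≤ K := by exact_mod_cast this
  linarith

lemma LMAE_le_mcount (hylyr : yl ≤ yr) : LMAE K (dotp w x) θ yl yr ≤ mcount K yl yr x w θ := by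
  have hdisj : Disjoint (Icc 1 (yl - 1)) (Icc yr (K - 1)) :=
    disjoint_left.mpr fun i hi hi' => by simp only [mem_Icc] at hi hi'; omega
  rw [mcount, ← sum_boole, Ibar, sum_union hdisj, LMAE]
  gcongr with i hi i hi <;> simp only [mem_Icc] at hi
  · simp only [zval, if_pos (show i < yl by omega)]
    split_ifs <;> linarith
  · simp only [zval, if_neg (show ¬ i < yl by omega)]
    split_ifs <;> linarith

lemma tau_mul_nonpos (i : ℕ) : tau K yl yr x w θ i * (dotp w x - θ i) ≤ 0 := by
  unfold tau
  split_ifs with h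
  · exact h.2
  · simp

lemma zval_sq (yl i : ℕ) : zval yl i ^ 2 = 1 := by
  unfold zval; split_ifs <;> norm_num

lemma abs_tau (i : ℕ) : |tau K yl yr x w θ i| = tau K yl yr x w θ i ^ 2 := by
  unfold tau zval
  split_ifs <;> norm_num

lemma mul_sq_tau_le_of_margin {γ : ℝ} {ws : Fin d → ℝ} {θs : ℕ → ℝ}
    (hm : ∀ i ∈ Ibar K yl yr, γ ≤ zval yl i * (dotp ws x - θs i)) (i : ℕ) :
    γ * tau K yl yr x w θ i ^ 2 ≤ tau K yl yr x w θ i * (dotp ws x - θs i) := by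
  unfold tau
  split_ifs with h
  · simpa [zval_sq] using hm i h.1
  · simp

lemma sum_sq_tau_eq_mcount (hylK : yl ≤ K) (h1yr : 1 ≤ yr) :
    ∑ i ∈ Icc 1 (K - 1), tau K yl yr x w θ i ^ 2 = mcount K yl yr x w θ := by
  rw [mcount, ← sum_boole, ← sum_subset (Ibar_subset_Icc hylK h1yr) fun i _ hi => by simp [tau, hi]]
  refine sum_congr rfl fun i hi => ?_
  simp only [tau, hi, true_and]
  split_ifs <;> simp [zval_sq]

lemma abs_sum_tau_le_mcount (hylK : yl ≤ K) (h1yr : 1 ≤ yr) :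
    |∑ i ∈ Icc 1 (K - 1), tau K yl yr x w θ i| ≤ mcount K yl yr x w θ := calc
  _ ≤ ∑ i ∈ Icc 1 (K - 1), |tau K yl yr x w θ i| := abs_sum_le_sum_abs _ _
  _ = mcount K yl yr x w θ := by simp only [abs_tau, sum_sq_tau_eq_mcount hylK h1yr]

lemma inner_pairVec_updateVec_tau_nonpos :
    ⟪pairVec K w θ, updateVec K x (tau K yl yr x w θ)⟫_ℝ ≤ 0 := by
  rw [inner_pairVec_updateVec]
  exact sum_nonpos fun i _ => tau_mul_nonpos i

lemma norm_updateVec_tau_sq_le (hylK : yl ≤ K) (h1yr : 1 ≤ yr) {R2 n : ℝ}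
    (hx : ∑ j, x j ^ 2 ≤ R2) (hn : (mcount K yl yr x w θ : ℝ) ≤ n) :
    ‖updateVec K x (tau K yl yr x w θ)‖ ^ 2 ≤ (R2 + 1) * n * mcount K yl yr x w θ := by
  set m : ℝ := ↑(mcount K yl yr x w θ)
  have hm : 0 ≤ m := Nat.cast_nonneg _
  have hm_sq : m ≤ m ^ 2 := by
    simp only [m]
    exact_mod_cast Nat.le_self_pow two_ne_zero (mcount K yl yr x w θ)
  have hR2 : 0 ≤ R2 := (sum_nonneg fun j _ => sq_nonneg (x j)).trans hx
  have hs : (∑ i ∈ Icc 1 (K - 1), tau K yl yr x w θ i) ^ 2 ≤ m ^ 2 := by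
    rw [← sq_abs]
    gcongr
    exact abs_sum_tau_le_mcount hylK h1yr
  calc ‖updateVec K x (tau K yl yr x w θ)‖ ^ 2
      = (∑ i ∈ Icc 1 (K - 1), tau K yl yr x w θ i) ^ 2 * ∑ j, x j ^ 2 + m := by
        rw [norm_updateVec_sq, sum_sq_tau_eq_mcount hylK h1yr]
    _ ≤ m ^ 2 * R2 + m ^ 2 := by gcongr
    _ = (R2 + 1) * m * m := by ring
    _ ≤ (R2 + 1) * n * m := by gcongr

lemma mul_mcount_le_inner_updateVec {γ : ℝ} {ws : Fin d → ℝ} {θs : ℕ → ℝ}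
    (hylK : yl ≤ K) (h1yr : 1 ≤ yr)
    (hm : ∀ i ∈ Ibar K yl yr, γ ≤ zval yl i * (dotp ws x - θs i)) :
    γ * mcount K yl yr x w θ ≤ ⟪updateVec K x (tau K yl yr x w θ), pairVec K ws θs⟫_ℝ := by
  rw [real_inner_comm, inner_pairVec_updateVec, ← sum_sq_tau_eq_mcount hylK h1yr, mul_sum]
  exact sum_le_sum fun i _ => mul_sq_tau_le_of_margin hm i

end Tau

theorem pril_mistake_bound_ideal_general
    {d K T : ℕ} (hT : 1 ≤ T)
    (x : ℕ → Fin d → ℝ) (yl yr : ℕ → ℕ)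
    (hy : ∀ t ∈ Finset.Icc 1 T, 1 ≤ yl t ∧ yl t ≤ yr t ∧ yr t ≤ K)
    (w : ℕ → Fin d → ℝ) (θ : ℕ → ℕ → ℝ)
    (hw1 : w 1 = 0) (hθ1 : ∀ i, θ 1 i = 0)
    (hwrec : ∀ t ∈ Finset.Icc 1 T,
      w (t+1) = w t + (∑ i ∈ Finset.Icc 1 (K-1),
        tau K (yl t) (yr t) (x t) (w t) (θ t) i) • x t)
    (hθrec : ∀ t ∈ Finset.Icc 1 T, ∀ i,
      θ (t+1) i = θ t i - tau K (yl t) (yr t) (x t) (w t) (θ t) i)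
    (R2 : ℝ)
    (hR2 : R2 = (Finset.Icc 1 T).sup' (Finset.nonempty_Icc.mpr hT)
      (fun t => ∑ i, (x t i) ^ 2))
    (c : ℕ)
    (hc : c = (Finset.Icc 1 T).inf' (Finset.nonempty_Icc.mpr hT)
      (fun t => yr t - yl t))
    (γ : ℝ) (hγ : 0 < γ)
    (ws : Fin d → ℝ) (θs : ℕ → ℝ)
    (hnorm : (∑ i, ws i ^ 2) + (∑ i ∈ Finset.Icc 1 (K-1), θs i ^ 2) = 1)
    (hmargin : ∀ t ∈ Finset.Icc 1 T, ∀ i ∈ Ibar K (yl t) (yr t),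
      γ ≤ zval (yl t) i * (dotp ws (x t) - θs i)) :
    ∑ t ∈ Finset.Icc 1 T, LMAE K (dotp (w t) (x t)) (θ t) (yl t) (yr t)
      ≤ (R2 + 1) * ((K : ℝ) - (c : ℝ) - 1) / γ ^ 2 := by
  set τ := fun t => tau K (yl t) (yr t) (x t) (w t) (θ t)
  set m := fun t => (mcount K (yl t) (yr t) (x t) (w t) (θ t) : ℝ)
  have hylK : ∀ t ∈ Icc 1 T, yl t ≤ K := fun t ht => (hy t ht).2.1.trans (hy t ht).2.2
  have h1yr : ∀ t ∈ Icc 1 T, 1 ≤ yr t := fun t ht => (hy t ht).1.trans (hy t ht).2.1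
  have hx : ∀ t ∈ Icc 1 T, ∑ j, x t j ^ 2 ≤ R2 := fun t ht =>
    hR2 ▸ le_sup' (fun t => ∑ i, x t i ^ 2) ht
  have hmK : ∀ t ∈ Icc 1 T, m t ≤ K - c - 1 := fun t ht =>
    mcount_le_sub (hy t ht).1 (hy t ht).2.1 (hy t ht).2.2 (hc ▸ inf'_le (fun t => yr t - yl t) ht)
  have h1T : 1 ∈ Icc 1 T := left_mem_Icc.mpr hT
  have hB : 0 ≤ (R2 + 1) * ((K : ℝ) - c - 1) :=
    mul_nonneg (by linarith [(sum_nonneg fun j _ => sq_nonneg (x 1 j)).trans (hx 1 h1T)])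
      ((Nat.cast_nonneg _).trans (hmK 1 h1T))
  calc ∑ t ∈ Icc 1 T, LMAE K (dotp (w t) (x t)) (θ t) (yl t) (yr t)
      ≤ ∑ t ∈ Icc 1 T, m t := sum_le_sum fun t ht => LMAE_le_mcount (hy t ht).2.1
    _ ≤ _ := by
      refine perceptron_sum_le_div_sq (v := fun t => pairVec K (w t) (θ t))
        (u := fun t => updateVec K (x t) (τ t)) (vs := pairVec K ws θs) hγ ?_ hB ?_ ?_
        (fun t _ => inner_pairVec_updateVec_tau_nonpos) (fun t _ => Nat.cast_nonneg _)
        (fun t ht => mul_mcount_le_inner_updateVec (hylK t ht) (h1yr t ht) (hmargin t ht))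
        (fun t ht => norm_updateVec_tau_sq_le (hylK t ht) (h1yr t ht) (hx t ht) (hmK t ht))
      · exact (pow_le_one_iff_of_nonneg (norm_nonneg _) two_ne_zero).mp
          (by rw [norm_pairVec_sq, hnorm])
      · simp only [hw1, show θ 1 = 0 from funext hθ1, pairVec_zero]
      · intro t ht
        rw [pairVec_add_updateVec, hwrec t ht, show θ (t + 1) = θ t - τ t from funext (hθrec t ht)]

/-- Mistake bound for PRIL, ideal case. -/
theorem pril_mistake_bound_ideal
    {d K T : ℕ} (hd : 1 ≤ d) (hK : 2 ≤ K) (hT : 1 ≤ T)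
    (x : ℕ → Fin d → ℝ) (yl yr : ℕ → ℕ)
    (hy : ∀ t ∈ Finset.Icc 1 T, 1 ≤ yl t ∧ yl t ≤ yr t ∧ yr t ≤ K)
    (w : ℕ → Fin d → ℝ) (θ : ℕ → ℕ → ℝ)
    (hw1 : w 1 = 0) (hθ1 : ∀ i, θ 1 i = 0)
    (hwrec : ∀ t ∈ Finset.Icc 1 T,
      w (t+1) = w t + (∑ i ∈ Finset.Icc 1 (K-1),
        tau K (yl t) (yr t) (x t) (w t) (θ t) i) • x t)
    (hθrec : ∀ t ∈ Finset.Icc 1 T, ∀ i,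
      θ (t+1) i = θ t i - tau K (yl t) (yr t) (x t) (w t) (θ t) i)
    (R2 : ℝ)
    (hR2 : R2 = (Finset.Icc 1 T).sup' (Finset.nonempty_Icc.mpr hT)
      (fun t => ∑ i, (x t i) ^ 2))
    (c : ℕ)
    (hc : c = (Finset.Icc 1 T).inf' (Finset.nonempty_Icc.mpr hT)
      (fun t => yr t - yl t))
    (γ : ℝ) (hγ : 0 < γ)
    (ws : Fin d → ℝ) (θs : ℕ → ℝ)
    (hnorm : (∑ i, ws i ^ 2) + (∑ i ∈ Finset.Icc 1 (K-1), θs i ^ 2) = 1)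
    (hmargin : ∀ t ∈ Finset.Icc 1 T, ∀ i ∈ Ibar K (yl t) (yr t),
      γ ≤ zval (yl t) i * (dotp ws (x t) - θs i)) :
    ∑ t ∈ Finset.Icc 1 T, LMAE K (dotp (w t) (x t)) (θ t) (yl t) (yr t)
      ≤ (R2 + 1) * ((K : ℝ) - (c : ℝ) - 1) / γ ^ 2 :=
  pril_mistake_bound_ideal_general hT x yl yr hy w θ hw1 hθ1 hwrec hθrec R2 hR2 c hc γ hγ ws θs
    hnorm hmargin
end

section
/- (Progress lower bound in the PRIL mistake-bound proof.) Suppose there exist γ > 0, w* ∈ ℝ^d and θ* ∈ ℝ^{K−1} such that z_i^t(w*·x^t − θ_i*) ≥ γ for all i ∈ Ī^t and all t ∈ [T]. Let v* = (w*, θ*) and let v^t = (w^t, θ^t) be the PRIL iterates. Then v^{T+1}·v* ≥ γ Σ_{t=1}^T m^t, where m^t = |{i ∈ Ī^t : z_i^t(w^t·x^t − θ_i^t) ≤ 0}|. -/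
open Finset

lemma Ibar_subset {K yl yr : ℕ} (hyl : 1 ≤ yl) (hlr : yl ≤ yr) (hyr : yr ≤ K) :
    Ibar K yl yr ⊆ Finset.Icc 1 (K-1) := by
  unfold Ibar
  apply Finset.union_subset
  · exact Finset.Icc_subset_Icc le_rfl (by omega)
  · intro i hi
    simp only [Finset.mem_Icc] at *
    omega

lemma step_bound {d K : ℕ} (x w ws : Fin d → ℝ) (θ θs : ℕ → ℝ) (yl yr : ℕ)
    (hyl : 1 ≤ yl) (hlr : yl ≤ yr) (hyr : yr ≤ K) (γ : ℝ)
    (hmargin : ∀ i ∈ Ibar K yl yr, γ ≤ zval yl i * (dotp ws x - θs i)) :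
    γ * (mcount K yl yr x w θ : ℝ)
      ≤ ∑ i ∈ Finset.Icc 1 (K-1), tau K yl yr x w θ i * (dotp ws x - θs i) := by
  set S := (Ibar K yl yr).filter (fun i => zval yl i * (dotp w x - θ i) ≤ 0) with hS
  have hrw : ∑ i ∈ Finset.Icc 1 (K-1), tau K yl yr x w θ i * (dotp ws x - θs i)
      = ∑ i ∈ S, zval yl i * (dotp ws x - θs i) := by
    rw [hS, Finset.sum_filter]
    rw [← Finset.sum_subset (Ibar_subset hyl hlr hyr)]
    · apply Finset.sum_congr rfl
      intro i hi
      unfold tau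
      by_cases h : zval yl i * (dotp w x - θ i) ≤ 0 <;> simp [h, hi, ite_mul]
    · intro i _ hni
      unfold tau
      simp [hni]
  rw [hrw, mcount]
  have := Finset.card_nsmul_le_sum S (fun i => zval yl i * (dotp ws x - θs i)) γ
    (fun i hi => hmargin i (Finset.mem_filter.mp hi).1)
  calc γ * (S.card : ℝ) = S.card • γ := by rw [nsmul_eq_mul, mul_comm]
    _ ≤ _ := this

lemma progress_step {d K : ℕ} (x wt wt1 ws : Fin d → ℝ) (θt θt1 θs : ℕ → ℝ) (yl yr : ℕ)
    (hw : wt1 = wt + (∑ i ∈ Finset.Icc 1 (K-1), tau K yl yr x wt θt i) • x)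
    (hθ : ∀ i, θt1 i = θt i - tau K yl yr x wt θt i) :
    dotp wt1 ws + ∑ i ∈ Finset.Icc 1 (K-1), θt1 i * θs i
      = dotp wt ws + (∑ i ∈ Finset.Icc 1 (K-1), θt i * θs i)
        + ∑ i ∈ Finset.Icc 1 (K-1), tau K yl yr x wt θt i * (dotp ws x - θs i) := by
  subst hw
  simp only [hθ, dotp, Pi.add_apply, Pi.smul_apply, smul_eq_mul, add_mul, sub_mul,
    Finset.sum_add_distrib, Finset.sum_sub_distrib, mul_sub, Finset.mul_sum, Finset.sum_mul]
  ring_nf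
  have h : ∀ i, ∑ j, tau K yl yr x wt θt i * x j * ws j
      = ∑ j, tau K yl yr x wt θt i * ws j * x j :=
    fun i => Finset.sum_congr rfl (fun j _ => by ring)
  rw [Finset.sum_comm, Finset.sum_congr rfl (fun i _ => h i)]
  ring

/-- Progress lower bound in the PRIL mistake-bound proof. -/
theorem pril_progress_lower_bound
    {d K T : ℕ} (hd : 1 ≤ d) (hK : 2 ≤ K)
    (x : ℕ → Fin d → ℝ) (yl yr : ℕ → ℕ)
    (hy : ∀ t ∈ Finset.Icc 1 T, 1 ≤ yl t ∧ yl t ≤ yr t ∧ yr t ≤ K)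
    (w : ℕ → Fin d → ℝ) (θ : ℕ → ℕ → ℝ)
    (hw1 : w 1 = 0) (hθ1 : ∀ i, θ 1 i = 0)
    (hwrec : ∀ t ∈ Finset.Icc 1 T,
      w (t+1) = w t + (∑ i ∈ Finset.Icc 1 (K-1),
        tau K (yl t) (yr t) (x t) (w t) (θ t) i) • x t)
    (hθrec : ∀ t ∈ Finset.Icc 1 T, ∀ i,
      θ (t+1) i = θ t i - tau K (yl t) (yr t) (x t) (w t) (θ t) i)
    (γ : ℝ) (hγ : 0 < γ)
    (ws : Fin d → ℝ) (θs : ℕ → ℝ)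
    (hmargin : ∀ t ∈ Finset.Icc 1 T, ∀ i ∈ Ibar K (yl t) (yr t),
      γ ≤ zval (yl t) i * (dotp ws (x t) - θs i)) :
    γ * (∑ t ∈ Finset.Icc 1 T, (mcount K (yl t) (yr t) (x t) (w t) (θ t) : ℝ))
      ≤ dotp (w (T+1)) ws + ∑ i ∈ Finset.Icc 1 (K-1), θ (T+1) i * θs i := by
  induction T with
  | zero =>
    have : Finset.Icc 1 0 = (∅ : Finset ℕ) := by simp
    simp [this, hw1, hθ1, dotp]
  | succ n ih =>
    have hsub : Finset.Icc 1 n ⊆ Finset.Icc 1 (n+1) :=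
      Finset.Icc_subset_Icc le_rfl (Nat.le_succ n)
    have IH := ih (fun t ht => hy t (hsub ht)) (fun t ht => hwrec t (hsub ht))
      (fun t ht => hθrec t (hsub ht)) (fun t ht => hmargin t (hsub ht))
    have hmem : n+1 ∈ Finset.Icc 1 (n+1) := by simp
    obtain ⟨h1, h2, h3⟩ := hy _ hmem
    rw [Finset.sum_Icc_succ_top (by omega : 1 ≤ n+1), mul_add]
    have hid := progress_step (x (n+1)) (w (n+1)) (w (n+2)) ws (θ (n+1)) (θ (n+2)) θs
      (yl (n+1)) (yr (n+1)) (hwrec _ hmem) (hθrec _ hmem)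
    have hstep := step_bound (x (n+1)) (w (n+1)) ws (θ (n+1)) θs (yl (n+1)) (yr (n+1))
      h1 h2 h3 γ (hmargin _ hmem)
    have : w (n+1+1) = w (n+2) := rfl
    rw [this]
    calc γ * ∑ t ∈ Finset.Icc 1 n, (mcount K (yl t) (yr t) (x t) (w t) (θ t) : ℝ)
          + γ * (mcount K (yl (n+1)) (yr (n+1)) (x (n+1)) (w (n+1)) (θ (n+1)) : ℝ)
        ≤ (dotp (w (n+1)) ws + ∑ i ∈ Finset.Icc 1 (K-1), θ (n+1) i * θs i)
          + ∑ i ∈ Finset.Icc 1 (K-1),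
              tau K (yl (n+1)) (yr (n+1)) (x (n+1)) (w (n+1)) (θ (n+1)) i
                * (dotp ws (x (n+1)) - θs i) := add_le_add IH hstep
      _ = _ := hid.symm
end

section
/- (Normalizer bound for M-PRIL.) Let η > 0 and c₁ ≥ 1 be real numbers. Let w^t ∈ ℝ^d and θ^t ∈ ℝ^{K−1} have nonnegative entries with Σ_{i=1}^d w_i^t + Σ_{k=1}^{K−1} θ_k^t = 1, let ‖x^t‖_∞ ≤ 1, let τ_k^t ∈ {−1, 0, +1} satisfy τ_k^t (w^t·x^t − θ_k^t) ≤ 0 for all k, and suppose |Σ_{k=1}^{K−1} τ_k^t| ≤ Σ_{k=1}^{K−1} |τ_k^t| ≤ c₁. Then Z^t = Σ_{i=1}^d w_i^t exp(η x_i^t Σ_{k=1}^{K−1} τ_k^t) + Σ_{k=1}^{K−1} θ_k^t exp(−η τ_k^t) satisfies Z^t ≤ (e^{η c₁} + e^{−η c₁})/2. -/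
open Finset

lemma exp_bound_aux (a b : ℝ) (hb : 0 < b) (ha : |a| ≤ b) :
    b * Real.exp a ≤ b * ((Real.exp b + Real.exp (-b)) / 2)
      + a * ((Real.exp b - Real.exp (-b)) / 2) := by
  obtain ⟨h1, h2⟩ := abs_le.mp ha
  have hb' : b ≠ 0 := ne_of_gt hb
  have hlam : 0 ≤ (b - a) / (2 * b) := by
    apply div_nonneg <;> linarith
  have hmu : 0 ≤ (a + b) / (2 * b) := by
    apply div_nonneg <;> linarith
  have hsum : (b - a) / (2 * b) + (a + b) / (2 * b) = 1 := by
    field_simp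
    ring
  have hconv := convexOn_exp.2 (Set.mem_univ (-b)) (Set.mem_univ b) hlam hmu hsum
  simp only [smul_eq_mul] at hconv
  have heq : (b - a) / (2 * b) * (-b) + (a + b) / (2 * b) * b = a := by
    field_simp
    ring
  rw [heq] at hconv
  have hmul := mul_le_mul_of_nonneg_left hconv hb.le
  have hrw : b * ((b - a) / (2 * b) * Real.exp (-b) + (a + b) / (2 * b) * Real.exp b)
      = b * ((Real.exp b + Real.exp (-b)) / 2)
        + a * ((Real.exp b - Real.exp (-b)) / 2) := by
    field_simp
    ring
  linarith [hrw ▸ hmul]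

/-- Normalizer bound for M-PRIL. -/
theorem mpril_normalizer_bound
    {d K : ℕ} (hd : 1 ≤ d) (hK : 2 ≤ K)
    (η c₁ : ℝ) (hη : 0 < η) (hc₁ : 1 ≤ c₁)
    (w x : Fin d → ℝ) (θ τ : ℕ → ℝ)
    (hw : ∀ i, 0 ≤ w i)
    (hθ : ∀ k ∈ Finset.Icc 1 (K-1), 0 ≤ θ k)
    (hsum : (∑ i, w i) + (∑ k ∈ Finset.Icc 1 (K-1), θ k) = 1)
    (hx : ∀ i, |x i| ≤ 1)
    (hτval : ∀ k ∈ Finset.Icc 1 (K-1), τ k = -1 ∨ τ k = 0 ∨ τ k = 1)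
    (hτsign : ∀ k ∈ Finset.Icc 1 (K-1), τ k * (dotp w x - θ k) ≤ 0)
    (hτ1 : |∑ k ∈ Finset.Icc 1 (K-1), τ k| ≤ ∑ k ∈ Finset.Icc 1 (K-1), |τ k|)
    (hτ2 : (∑ k ∈ Finset.Icc 1 (K-1), |τ k|) ≤ c₁) :
    (∑ i, w i * Real.exp (η * x i * ∑ k ∈ Finset.Icc 1 (K-1), τ k))
      + (∑ k ∈ Finset.Icc 1 (K-1), θ k * Real.exp (-η * τ k))
    ≤ (Real.exp (η * c₁) + Real.exp (-(η * c₁))) / 2 := by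
  set T : ℝ := ∑ k ∈ Finset.Icc 1 (K-1), τ k with hT_def
  set b : ℝ := η * c₁ with hb_def
  have hc₁' : (0:ℝ) < c₁ := lt_of_lt_of_le one_pos hc₁
  have hb : 0 < b := mul_pos hη hc₁'
  set C : ℝ := (Real.exp b + Real.exp (-b)) / 2 with hC_def
  set S : ℝ := (Real.exp b - Real.exp (-b)) / 2 with hS_def
  have hS : 0 ≤ S := by
    have : Real.exp (-b) ≤ Real.exp b := Real.exp_le_exp.mpr (by linarith)
    simp only [hS_def]; linarith
  have hT : |T| ≤ c₁ := hτ1.trans hτ2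
  have habs1 : ∀ i, |η * x i * T| ≤ b := by
    intro i
    rw [abs_mul, abs_mul, abs_of_pos hη]
    have h' : |x i| * |T| ≤ 1 * c₁ := mul_le_mul (hx i) hT (abs_nonneg T) zero_le_one
    calc η * |x i| * |T| = η * (|x i| * |T|) := by ring
      _ ≤ η * (1 * c₁) := mul_le_mul_of_nonneg_left h' hη.le
      _ = b := by rw [hb_def]; ring
  have hτabs : ∀ k ∈ Finset.Icc 1 (K-1), |τ k| ≤ 1 := by
    intro k hk
    rcases hτval k hk with h | h | h <;> simp [h]
  have habs2 : ∀ k ∈ Finset.Icc 1 (K-1), |(-η) * τ k| ≤ b := by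
    intro k hk
    rw [abs_mul, abs_neg, abs_of_pos hη]
    have := hτabs k hk
    nlinarith
  have h1 : ∀ i ∈ Finset.univ (α := Fin d),
      b * (w i * Real.exp (η * x i * T)) ≤ w i * (b * C + (η * x i * T) * S) := by
    intro i _
    have := mul_le_mul_of_nonneg_left (exp_bound_aux (η * x i * T) b hb (habs1 i)) (hw i)
    calc b * (w i * Real.exp (η * x i * T))
        = w i * (b * Real.exp (η * x i * T)) := by ring
      _ ≤ w i * (b * C + (η * x i * T) * S) := this
  have h2 : ∀ k ∈ Finset.Icc 1 (K-1),
      b * (θ k * Real.exp (-η * τ k)) ≤ θ k * (b * C + ((-η) * τ k) * S) := by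
    intro k hk
    have := mul_le_mul_of_nonneg_left
      (exp_bound_aux ((-η) * τ k) b hb (habs2 k hk)) (hθ k hk)
    calc b * (θ k * Real.exp (-η * τ k))
        = θ k * (b * Real.exp ((-η) * τ k)) := by ring_nf
      _ ≤ θ k * (b * C + ((-η) * τ k) * S) := this
  have hA : ∑ i, w i * (b * C + (η * x i * T) * S)
      = b * C * (∑ i, w i) + η * S * T * dotp w x := by
    rw [dotp, Finset.mul_sum, Finset.mul_sum, ← Finset.sum_add_distrib]
    apply Finset.sum_congr rfl
    intro i _
    ring
  have hB : ∑ k ∈ Finset.Icc 1 (K-1), θ k * (b * C + ((-η) * τ k) * S)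
      = b * C * (∑ k ∈ Finset.Icc 1 (K-1), θ k)
        - η * S * (∑ k ∈ Finset.Icc 1 (K-1), θ k * τ k) := by
    rw [Finset.mul_sum, Finset.mul_sum, ← Finset.sum_sub_distrib]
    apply Finset.sum_congr rfl
    intro k _
    ring
  have hC2 : T * dotp w x - (∑ k ∈ Finset.Icc 1 (K-1), θ k * τ k)
      = ∑ k ∈ Finset.Icc 1 (K-1), τ k * (dotp w x - θ k) := by
    rw [hT_def, Finset.sum_mul, ← Finset.sum_sub_distrib]
    apply Finset.sum_congr rfl
    intro k _
    ring
  have hkey : (∑ k ∈ Finset.Icc 1 (K-1), τ k * (dotp w x - θ k)) ≤ 0 :=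
    Finset.sum_nonpos hτsign
  have hmain : b * ((∑ i, w i * Real.exp (η * x i * T))
      + (∑ k ∈ Finset.Icc 1 (K-1), θ k * Real.exp (-η * τ k))) ≤ b * C := by
    calc b * ((∑ i, w i * Real.exp (η * x i * T))
          + (∑ k ∈ Finset.Icc 1 (K-1), θ k * Real.exp (-η * τ k)))
        = (∑ i, b * (w i * Real.exp (η * x i * T)))
          + (∑ k ∈ Finset.Icc 1 (K-1), b * (θ k * Real.exp (-η * τ k))) := by
          rw [mul_add, Finset.mul_sum, Finset.mul_sum]
      _ ≤ (∑ i, w i * (b * C + (η * x i * T) * S))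
          + (∑ k ∈ Finset.Icc 1 (K-1), θ k * (b * C + ((-η) * τ k) * S)) :=
          add_le_add (Finset.sum_le_sum h1) (Finset.sum_le_sum h2)
      _ = b * C * ((∑ i, w i) + (∑ k ∈ Finset.Icc 1 (K-1), θ k))
          + η * S * (∑ k ∈ Finset.Icc 1 (K-1), τ k * (dotp w x - θ k)) := by
          rw [hA, hB, ← hC2]; ring
      _ ≤ b * C * 1 + η * S * 0 := by
          rw [hsum]
          nlinarith [hkey, mul_nonneg hη.le hS]
      _ = b * C := by ring
  have := le_of_mul_le_mul_left hmain hb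
  simpa [hC_def] using this
end

section
/- (KL-divergence decrease per M-PRIL step.) Let v* = (w*, θ*) and v^t = (w^t, θ^t) be probability vectors on the K+d−1 coordinates (nonnegative entries summing to 1, with all entries of v^t strictly positive), and let v^{t+1} be obtained from v^t by one M-PRIL update with learning rate η > 0 on the trial (x^t, y_l^t, y_r^t). Suppose z_i^t(w*·x^t − θ_i*) ≥ γ for all i ∈ Ī^t, where γ > 0. Then D_KL(v* ‖ v^{t+1}) − D_KL(v* ‖ v^t) ≤ log Z^t − η γ m^t, where m^t = |{i ∈ Ī^t : z_i^t(w^t·x^t − θ_i^t) ≤ 0}| and D_KL(p ‖ q) = Σ_j p_j log(p_j/q_j). -/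
open Finset

/-- KL-divergence decrease per M-PRIL step. -/
theorem mpril_kl_decrease
    {d K : ℕ} (hd : 1 ≤ d) (hK : 2 ≤ K)
    (x : Fin d → ℝ) (yl yr : ℕ) (hyl : 1 ≤ yl) (hlr : yl ≤ yr) (hyr : yr ≤ K)
    (η γ : ℝ) (hη : 0 < η) (hγ : 0 < γ)
    (ws : Fin d → ℝ) (θs : ℕ → ℝ)
    (hwsn : ∀ i, 0 ≤ ws i)
    (hθsn : ∀ k ∈ Finset.Icc 1 (K-1), 0 ≤ θs k)
    (hssum : (∑ i, ws i) + (∑ k ∈ Finset.Icc 1 (K-1), θs k) = 1)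
    (w : Fin d → ℝ) (θ : ℕ → ℝ)
    (hwpos : ∀ i, 0 < w i)
    (hθpos : ∀ k ∈ Finset.Icc 1 (K-1), 0 < θ k)
    (hsum : (∑ i, w i) + (∑ k ∈ Finset.Icc 1 (K-1), θ k) = 1)
    (hmargin : ∀ i ∈ Ibar K yl yr, γ ≤ zval yl i * (dotp ws x - θs i))
    (Z : ℝ)
    (hZ : Z = (∑ i, w i * Real.exp (η * x i * ∑ k ∈ Finset.Icc 1 (K-1), tau K yl yr x w θ k))
      + ∑ k ∈ Finset.Icc 1 (K-1), θ k * Real.exp (-η * tau K yl yr x w θ k))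
    (w' : Fin d → ℝ) (θ' : ℕ → ℝ)
    (hw' : ∀ i, w' i = w i * Real.exp (η * x i *
      ∑ k ∈ Finset.Icc 1 (K-1), tau K yl yr x w θ k) / Z)
    (hθ' : ∀ k, θ' k = θ k * Real.exp (-η * tau K yl yr x w θ k) / Z) :
    ((∑ i, ws i * Real.log (ws i / w' i))
        + ∑ k ∈ Finset.Icc 1 (K-1), θs k * Real.log (θs k / θ' k))
      - ((∑ i, ws i * Real.log (ws i / w i))
        + ∑ k ∈ Finset.Icc 1 (K-1), θs k * Real.log (θs k / θ k))
    ≤ Real.log Z - η * γ * (mcount K yl yr x w θ : ℝ) := by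
  classical
  set S := ∑ k ∈ Finset.Icc 1 (K-1), tau K yl yr x w θ k with hS
  -- Z is positive
  have hZpos : 0 < Z := by
    rw [hZ]
    have h1 : 0 < ∑ i, w i * Real.exp (η * x i * S) := by
      apply Finset.sum_pos (fun i _ => mul_pos (hwpos i) (Real.exp_pos _))
      exact Finset.univ_nonempty_iff.mpr ⟨⟨0, hd⟩⟩
    have h2 : 0 ≤ ∑ k ∈ Finset.Icc 1 (K-1), θ k * Real.exp (-η * tau K yl yr x w θ k) :=
      Finset.sum_nonneg fun k hk => le_of_lt (mul_pos (hθpos k hk) (Real.exp_pos _))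
    linarith
  have hkey : ∀ (p q a : ℝ), 0 ≤ p → 0 < q →
      p * Real.log (p / (q * Real.exp a / Z)) - p * Real.log (p / q)
        = p * (Real.log Z - a) := by
    intro p q a hp hq
    rcases eq_or_lt_of_le hp with h | h
    · simp [← h]
    · rw [Real.log_div (ne_of_gt h) (by positivity),
        Real.log_div (ne_of_gt h) (ne_of_gt hq),
        Real.log_div (by positivity) (ne_of_gt hZpos),
        Real.log_mul (ne_of_gt hq) (Real.exp_ne_zero a), Real.log_exp]
      ring
  -- rewrite LHS
  have hLHS : ((∑ i, ws i * Real.log (ws i / w' i))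
        + ∑ k ∈ Finset.Icc 1 (K-1), θs k * Real.log (θs k / θ' k))
      - ((∑ i, ws i * Real.log (ws i / w i))
        + ∑ k ∈ Finset.Icc 1 (K-1), θs k * Real.log (θs k / θ k))
      = Real.log Z - η * (∑ k ∈ Finset.Icc 1 (K-1),
          tau K yl yr x w θ k * (dotp ws x - θs k)) := by
    have e1 : (∑ i, ws i * Real.log (ws i / w' i))
        - (∑ i, ws i * Real.log (ws i / w i))
        = ∑ i, ws i * (Real.log Z - η * x i * S) := by
      rw [← Finset.sum_sub_distrib]
      refine Finset.sum_congr rfl fun i _ => ?_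
      rw [hw' i]
      exact hkey (ws i) (w i) (η * x i * S) (hwsn i) (hwpos i)
    have e2 : (∑ k ∈ Finset.Icc 1 (K-1), θs k * Real.log (θs k / θ' k))
        - (∑ k ∈ Finset.Icc 1 (K-1), θs k * Real.log (θs k / θ k))
        = ∑ k ∈ Finset.Icc 1 (K-1), θs k * (Real.log Z + η * tau K yl yr x w θ k) := by
      rw [← Finset.sum_sub_distrib]
      refine Finset.sum_congr rfl fun k hk => ?_
      rw [hθ' k]
      have := hkey (θs k) (θ k) (-η * tau K yl yr x w θ k) (hθsn k hk) (hθpos k hk)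
      rw [this]; ring
    have e3 : ∑ i, ws i * (Real.log Z - η * x i * S)
        = Real.log Z * (∑ i, ws i) - η * S * dotp ws x := by
      rw [Finset.mul_sum, dotp, Finset.mul_sum, ← Finset.sum_sub_distrib]
      refine Finset.sum_congr rfl fun i _ => by ring
    have e4 : ∑ k ∈ Finset.Icc 1 (K-1), θs k * (Real.log Z + η * tau K yl yr x w θ k)
        = Real.log Z * (∑ k ∈ Finset.Icc 1 (K-1), θs k)
          + η * ∑ k ∈ Finset.Icc 1 (K-1), θs k * tau K yl yr x w θ k := by
      rw [Finset.mul_sum, Finset.mul_sum, ← Finset.sum_add_distrib]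
      refine Finset.sum_congr rfl fun k _ => by ring
    have e5 : S * dotp ws x - ∑ k ∈ Finset.Icc 1 (K-1), θs k * tau K yl yr x w θ k
        = ∑ k ∈ Finset.Icc 1 (K-1), tau K yl yr x w θ k * (dotp ws x - θs k) := by
      rw [hS, Finset.sum_mul, ← Finset.sum_sub_distrib]
      refine Finset.sum_congr rfl fun k _ => by ring
    have : ((∑ i, ws i * Real.log (ws i / w' i))
        + ∑ k ∈ Finset.Icc 1 (K-1), θs k * Real.log (θs k / θ' k))
      - ((∑ i, ws i * Real.log (ws i / w i))
        + ∑ k ∈ Finset.Icc 1 (K-1), θs k * Real.log (θs k / θ k))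
      = ((∑ i, ws i * Real.log (ws i / w' i)) - (∑ i, ws i * Real.log (ws i / w i)))
        + ((∑ k ∈ Finset.Icc 1 (K-1), θs k * Real.log (θs k / θ' k))
          - ∑ k ∈ Finset.Icc 1 (K-1), θs k * Real.log (θs k / θ k)) := by ring
    rw [this, e1, e2, e3, e4]
    have : Real.log Z * (∑ i, ws i) + Real.log Z * (∑ k ∈ Finset.Icc 1 (K-1), θs k)
        = Real.log Z := by rw [← mul_add, hssum, mul_one]
    nlinarith [e5]
  rw [hLHS]
  -- lower bound the sum
  have hIbarSub : Ibar K yl yr ⊆ Finset.Icc 1 (K-1) := by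
    rw [Ibar]
    apply Finset.union_subset
    · exact Finset.Icc_subset_Icc le_rfl (by omega)
    · exact Finset.Icc_subset_Icc (by omega) le_rfl
  have hbound : γ * (mcount K yl yr x w θ : ℝ)
      ≤ ∑ k ∈ Finset.Icc 1 (K-1), tau K yl yr x w θ k * (dotp ws x - θs k) := by
    have hfil : (Finset.Icc 1 (K-1)).filter
        (fun k => k ∈ Ibar K yl yr ∧ zval yl k * (dotp w x - θ k) ≤ 0)
        = (Ibar K yl yr).filter (fun k => zval yl k * (dotp w x - θ k) ≤ 0) := by
      ext k
      simp only [Finset.mem_filter]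
      constructor
      · rintro ⟨_, h1, h2⟩; exact ⟨h1, h2⟩
      · rintro ⟨h1, h2⟩; exact ⟨hIbarSub h1, h1, h2⟩
    have : γ * (mcount K yl yr x w θ : ℝ)
        = ∑ k ∈ Finset.Icc 1 (K-1),
            (if k ∈ Ibar K yl yr ∧ zval yl k * (dotp w x - θ k) ≤ 0 then γ else 0) := by
      rw [← Finset.sum_filter, hfil, Finset.sum_const, mcount, nsmul_eq_mul, mul_comm]
    rw [this]
    apply Finset.sum_le_sum
    intro k hk
    by_cases hc : k ∈ Ibar K yl yr ∧ zval yl k * (dotp w x - θ k) ≤ 0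
    · rw [if_pos hc, tau, if_pos hc]
      exact hmargin k hc.1
    · rw [if_neg hc, tau, if_neg hc, zero_mul]
  have := mul_le_mul_of_nonneg_left hbound (le_of_lt hη)
  nlinarith
end
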